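/- arXiv:math/0103198 — 4 statements merged into one kernel-verified Lean document; each statement's English description precedes it below -/
import Mathlib

section
/- The explicit B1a mask with entries c₀₀ = −1/4 − √2/8, c₀₁ = √2/8, c₀₂ = 1/2 − √3/4 + √2/8, c₀₃ = 1/4 − √2/8 − √3/4, c₁₀ = 0, c₁₁ = 1/2, c₁₂ = 3/4 − √3/4, c₁₃ = 1/4 − √3/4, c₂₀ = 1/2 + √3/4 + √2/8, c₂₁ = 3/4 + √3/4 − √2/8, c₂₂ = 1/4 − √2/8, c₂₃ = √2/8, c₃₀ = 1/4 + √3/4, c₃₁ = 1/4 + √3/4, c₃₂ = 0, c₃₃ = 0 satisfies the averaging equation ∑_{i,j} c i j = 4 and the norm equation ∑_{i,j} (c i j)² = 4. -/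
theorem B1a_mask_averaging_and_norm (c : Fin 4 → Fin 4 → ℝ)
    (h00 : c 0 0 = -1 / 4 - Real.sqrt 2 / 8)
    (h01 : c 0 1 = Real.sqrt 2 / 8)
    (h02 : c 0 2 = 1 / 2 - Real.sqrt 3 / 4 + Real.sqrt 2 / 8)
    (h03 : c 0 3 = 1 / 4 - Real.sqrt 2 / 8 - Real.sqrt 3 / 4)
    (h10 : c 1 0 = 0)
    (h11 : c 1 1 = 1 / 2)
    (h12 : c 1 2 = 3 / 4 - Real.sqrt 3 / 4)
    (h13 : c 1 3 = 1 / 4 - Real.sqrt 3 / 4)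
    (h20 : c 2 0 = 1 / 2 + Real.sqrt 3 / 4 + Real.sqrt 2 / 8)
    (h21 : c 2 1 = 3 / 4 + Real.sqrt 3 / 4 - Real.sqrt 2 / 8)
    (h22 : c 2 2 = 1 / 4 - Real.sqrt 2 / 8)
    (h23 : c 2 3 = Real.sqrt 2 / 8)
    (h30 : c 3 0 = 1 / 4 + Real.sqrt 3 / 4)
    (h31 : c 3 1 = 1 / 4 + Real.sqrt 3 / 4)
    (h32 : c 3 2 = 0)
    (h33 : c 3 3 = 0)
    :
    (∑ i : Fin 4, ∑ j : Fin 4, c i j = 4) ∧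
    (∑ i : Fin 4, ∑ j : Fin 4, (c i j) ^ 2 = 4) := by
  have s2 : Real.sqrt 2 ^ 2 = 2 := Real.sq_sqrt (by norm_num)
  have s3 : Real.sqrt 3 ^ 2 = 3 := Real.sq_sqrt (by norm_num)
  simp only [Fin.sum_univ_four, h00, h01, h02, h03, h10, h11, h12, h13,
      h20, h21, h22, h23, h30, h31, h32, h33]
  constructor
  · ring
  · linear_combination (1/8 : ℝ) * s2 + (1/2 : ℝ) * s3
end

section
/- The explicit B1a mask satisfies all three diagonal/horizontal/vertical orthogonality equations: c₃₃c₁₁ + c₃₂c₁₀ + c₂₃c₀₁ + c₂₂c₀₀ = 0; c₃₃c₁₃ + c₃₂c₁₂ + c₂₃c₀₃ + c₂₂c₀₂ + c₃₁c₁₁ + c₃₀c₁₀ + c₂₁c₀₁ + c₂₀c₀₀ = 0; and c₃₃c₃₁ + c₃₂c₃₀ + c₂₃c₂₁ + c₂₂c₂₀ + c₁₃c₁₁ + c₁₂c₁₀ + c₀₃c₀₁ + c₀₂c₀₀ = 0. -/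
theorem B1a_mask_three_orthogonality (c : Fin 4 → Fin 4 → ℝ)
    (h00 : c 0 0 = -1 / 4 - Real.sqrt 2 / 8)
    (h01 : c 0 1 = Real.sqrt 2 / 8)
    (h02 : c 0 2 = 1 / 2 - Real.sqrt 3 / 4 + Real.sqrt 2 / 8)
    (h03 : c 0 3 = 1 / 4 - Real.sqrt 2 / 8 - Real.sqrt 3 / 4)
    (h10 : c 1 0 = 0)
    (h11 : c 1 1 = 1 / 2)
    (h12 : c 1 2 = 3 / 4 - Real.sqrt 3 / 4)
    (h13 : c 1 3 = 1 / 4 - Real.sqrt 3 / 4)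
    (h20 : c 2 0 = 1 / 2 + Real.sqrt 3 / 4 + Real.sqrt 2 / 8)
    (h21 : c 2 1 = 3 / 4 + Real.sqrt 3 / 4 - Real.sqrt 2 / 8)
    (h22 : c 2 2 = 1 / 4 - Real.sqrt 2 / 8)
    (h23 : c 2 3 = Real.sqrt 2 / 8)
    (h30 : c 3 0 = 1 / 4 + Real.sqrt 3 / 4)
    (h31 : c 3 1 = 1 / 4 + Real.sqrt 3 / 4)
    (h32 : c 3 2 = 0)
    (h33 : c 3 3 = 0)
    :
    (c 3 3 * c 1 1 + c 3 2 * c 1 0 + c 2 3 * c 0 1 + c 2 2 * c 0 0 = 0) ∧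
    (c 3 3 * c 1 3 + c 3 2 * c 1 2 + c 2 3 * c 0 3 + c 2 2 * c 0 2 +
      c 3 1 * c 1 1 + c 3 0 * c 1 0 + c 2 1 * c 0 1 + c 2 0 * c 0 0 = 0) ∧
    (c 3 3 * c 3 1 + c 3 2 * c 3 0 + c 2 3 * c 2 1 + c 2 2 * c 2 0 +
      c 1 3 * c 1 1 + c 1 2 * c 1 0 + c 0 3 * c 0 1 + c 0 2 * c 0 0 = 0) := by
  have s2 : Real.sqrt 2 ^ 2 = 2 := Real.sq_sqrt (by norm_num)
  have s3 : Real.sqrt 3 ^ 2 = 3 := Real.sq_sqrt (by norm_num)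
  simp only [h00, h01, h02, h03, h10, h11, h12, h13, h20, h21, h22, h23, h30, h31, h32, h33]
  refine ⟨by linear_combination (1/32) * s2, by linear_combination (-1/16) * s2,
    by linear_combination (-1/16) * s2⟩
end

section
/- Let L be the 4×4 real matrix with rows [c₁₁, c₀₁, c₁₀, c₀₀], [c₃₁, c₂₁, c₃₀, c₂₀], [c₁₃, c₀₃, c₁₂, c₀₂], [c₃₃, c₂₃, c₃₂, c₂₂], where the ten coefficients c₀₀, c₀₁, c₀₂, c₀₃, c₁₀, c₁₁, c₁₂, c₂₀, c₂₁, c₃₀ are given by the linear formulas c₀₀ = −c₃₁ − 2c₃₃ − c₁₃ + c₂₂, c₀₁ = −c₃₁ − 2c₃₃ + 1/2 + c₂₃ − c₁₃, c₀₂ = c₁₃ + c₃₃ + 1/2 − c₂₂, c₀₃ = c₃₃ − c₂₃ + c₁₃, c₁₀ = −c₃₁ − 2c₃₃ + c₃₂ − c₁₃ + 1/2, c₁₁ = −c₁₃ − c₃₁ − c₃₃ + 1, c₁₂ = −c₃₂ + c₁₃ + c₃₃ + 1/2, c₂₀ = c₃₁ + c₃₃ − c₂₂ + 1/2, c₂₁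 = c₃₁ + c₃₃ + 1/2 − c₂₃, c₃₀ = c₃₁ + c₃₃ − c₃₂, in terms of free parameters c₁₃, c₂₂, c₂₃, c₃₁, c₃₂, c₃₃ ∈ ℝ. Then the characteristic polynomial of L is (λ − 1)(λ − 1/2)²(λ − (c₂₂ + c₃₃ − c₃₂ − c₂₃)); in particular L has eigenvalues 1, 1/2 (with multiplicity two), and c₂₂ + c₃₃ − c₃₂ − c₂₃. -/
open Polynomial

set_option maxHeartbeats 1000000 in
theorem det_fin_four' {R : Type*} [CommRing R] (M : Matrix (Fin 4) (Fin 4) R) :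
    M.det =
      M 0 0 * (M 1 1 * (M 2 2 * M 3 3 - M 2 3 * M 3 2) - M 1 2 * (M 2 1 * M 3 3 - M 2 3 * M 3 1)
        + M 1 3 * (M 2 1 * M 3 2 - M 2 2 * M 3 1)) -
      M 0 1 * (M 1 0 * (M 2 2 * M 3 3 - M 2 3 * M 3 2) - M 1 2 * (M 2 0 * M 3 3 - M 2 3 * M 3 0)
        + M 1 3 * (M 2 0 * M 3 2 - M 2 2 * M 3 0)) +
      M 0 2 * (M 1 0 * (M 2 1 * M 3 3 - M 2 3 * M 3 1) - M 1 1 * (M 2 0 * M 3 3 - M 2 3 * M 3 0)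
        + M 1 3 * (M 2 0 * M 3 1 - M 2 1 * M 3 0)) -
      M 0 3 * (M 1 0 * (M 2 1 * M 3 2 - M 2 2 * M 3 1) - M 1 1 * (M 2 0 * M 3 2 - M 2 2 * M 3 0)
        + M 1 2 * (M 2 0 * M 3 1 - M 2 1 * M 3 0)) := by
  rw [Matrix.det_succ_row_zero, Fin.sum_univ_four]
  norm_num (config := { decide := true }) [Matrix.det_fin_three, Matrix.submatrix_apply,
    Fin.succAbove, Fin.lt_def]
  simp only [show ((2:Fin 3).succ : Fin 4) = 3 from rfl,
    show (Fin.castSucc (2:Fin 3) : Fin 4) = 2 from rfl]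
  ring


set_option maxHeartbeats 2000000 in
theorem transfer_matrix_charpoly (c13 c22 c23 c31 c32 c33 : ℝ)
    (c00 c01 c02 c03 c10 c11 c12 c20 c21 c30 : ℝ)
    (h00 : c00 = -c31 - 2 * c33 - c13 + c22)
    (h01 : c01 = -c31 - 2 * c33 + 1 / 2 + c23 - c13)
    (h02 : c02 = c13 + c33 + 1 / 2 - c22)
    (h03 : c03 = c33 - c23 + c13)
    (h10 : c10 = -c31 - 2 * c33 + c32 - c13 + 1 / 2)
    (h11 : c11 = -c13 - c31 - c33 + 1)
    (h12 : c12 = -c32 + c13 + c33 + 1 / 2)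
    (h20 : c20 = c31 + c33 - c22 + 1 / 2)
    (h21 : c21 = c31 + c33 + 1 / 2 - c23)
    (h30 : c30 = c31 + c33 - c32)
    (L : Matrix (Fin 4) (Fin 4) ℝ)
    (hL : L = !![c11, c01, c10, c00;
                 c31, c21, c30, c20;
                 c13, c03, c12, c02;
                 c33, c23, c32, c22]) :
    L.charpoly = (X - C 1) * (X - C (1 / 2)) ^ 2 * (X - C (c22 + c33 - c32 - c23)) := by
  subst h00 h01 h02 h03 h10 h11 h12 h20 h21 h30 hL
  rw [Matrix.charpoly]
  have hc : (!![(-c13 - c31 - c33 + 1 : ℝ), -c31 - 2 * c33 + 1 / 2 + c23 - c13,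
      -c31 - 2 * c33 + c32 - c13 + 1 / 2, -c31 - 2 * c33 - c13 + c22;
      c31, c31 + c33 + 1 / 2 - c23, c31 + c33 - c32, c31 + c33 - c22 + 1 / 2;
      c13, c33 - c23 + c13, -c32 + c13 + c33 + 1 / 2, c13 + c33 + 1 / 2 - c22;
      c33, c23, c32, c22]).charmatrix =
      !![X - C (-c13 - c31 - c33 + 1), -C (-c31 - 2 * c33 + 1 / 2 + c23 - c13),
      -C (-c31 - 2 * c33 + c32 - c13 + 1 / 2), -C (-c31 - 2 * c33 - c13 + c22);
      -C c31, X - C (c31 + c33 + 1 / 2 - c23), -C (c31 + c33 - c32), -C (c31 + c33 - c22 + 1 / 2);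
      -C c13, -C (c33 - c23 + c13), X - C (-c32 + c13 + c33 + 1 / 2), -C (c13 + c33 + 1 / 2 - c22);
      -C c33, -C c23, -C c32, X - C c22] := by
    ext i j
    fin_cases i <;> fin_cases j <;>
      simp [Matrix.charmatrix_apply_eq, Matrix.charmatrix_apply_ne]
  rw [hc, det_fin_four']
  norm_num [Matrix.cons_val_zero, Matrix.cons_val_one, Matrix.head_cons, Matrix.cons_val_two,
    Matrix.tail_cons, Matrix.cons_val_three, map_add, map_sub, map_mul, map_neg, map_ofNat,
    map_one, map_div₀, Matrix.cons_val', Matrix.empty_val', Matrix.cons_val_fin_one,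
    Matrix.head_fin_const]
  apply Polynomial.funext
  intro x
  simp only [eval_mul, eval_add, eval_sub, eval_neg, eval_pow, eval_X, eval_C, eval_one,
    eval_ofNat]
  ring
end

section
/- Let φ : ℝ × ℝ → ℝ be continuous, supported in [0,3] × [0,3], satisfy the dilation equation with coefficients c i j supported on {0,...,3}², and suppose ∑_{i,j ∈ ℤ} c (a−2i) (b−2j) = 1 for every a, b ∈ ℤ, and ∫∫ φ = 1. Then ∑_{i,j ∈ ℤ} φ(x − i, y − j) = 1 for all (x, y) ∈ ℝ² (partition of unity). -/
/-!
Let `S(p) = ∑_{k ∈ ℤ²} φ(p - k)` be the periodization of `φ`; the compact support of `φ` makes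
every sum finite and `S` continuous. Substituting the dilation equation into each term and
collecting the terms with the same `φ(2p - a)` gives coefficients `∑_k c(a - 2k) = 1`, so
`S(p) = S(2p)`. Hence `S(p) = S(2⁻ⁿp) → S(0)`: `S` is constant. Finally, the integral of `S`
over the unit square `[0,1)²` is the sum of the integrals of `φ` over the integer translates of
that square, i.e. `∫ φ = 1`, so the constant is `1`.
-/

open MeasureTheory Function Set Filter Topology

section Finsum

variable {α β γ δ M : Type*} [AddCommMonoid M]

theorem finsum_finsum_eq_sum_sum {f : α → β → M} (s : Finset α) (t : Finset β)
    (hf : ∀ a b, f a b ≠ 0 → a ∈ s ∧ b ∈ t) :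
    ∑ᶠ (a) (b), f a b = ∑ a ∈ s, ∑ b ∈ t, f a b := by
  rw [finsum_congr fun a ↦ finsum_eq_sum_of_support_subset _ fun b hb ↦ (hf a b hb).2]
  refine finsum_eq_sum_of_support_subset _ fun a ha ↦ ?_
  obtain ⟨b, -, hb⟩ := Finset.exists_ne_zero_of_sum_ne_zero ha
  exact (hf a b hb).1

theorem finsum_finsum_comm₂ {F : α → β → γ → δ → M} (s : Finset α) (t : Finset β)
    (u : Finset γ) (v : Finset δ)
    (hF : ∀ a b c d, F a b c d ≠ 0 → a ∈ s ∧ b ∈ t ∧ c ∈ u ∧ d ∈ v) :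
    ∑ᶠ (a) (b), ∑ᶠ (c) (d), F a b c d = ∑ᶠ (c) (d), ∑ᶠ (a) (b), F a b c d := by
  have inner_ab : ∀ c d, ∑ᶠ (a) (b), F a b c d = ∑ a ∈ s, ∑ b ∈ t, F a b c d := fun c d ↦
    finsum_finsum_eq_sum_sum s t fun a b h ↦ ⟨(hF a b c d h).1, (hF a b c d h).2.1⟩
  have inner_cd : ∀ a b, ∑ᶠ (c) (d), F a b c d = ∑ c ∈ u, ∑ d ∈ v, F a b c d := fun a b ↦
    finsum_finsum_eq_sum_sum u v fun c d h ↦ (hF a b c d h).2.2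
  simp only [inner_ab, inner_cd]
  rw [finsum_finsum_eq_sum_sum s t, finsum_finsum_eq_sum_sum u v]
  · calc _ = ∑ x ∈ s ×ˢ t, ∑ y ∈ u ×ˢ v, F x.1 x.2 y.1 y.2 := by simp only [Finset.sum_product]
      _ = ∑ y ∈ u ×ˢ v, ∑ x ∈ s ×ˢ t, F x.1 x.2 y.1 y.2 := Finset.sum_comm
      _ = _ := by simp only [Finset.sum_product]
  · intro c d h
    obtain ⟨a, -, h⟩ := Finset.exists_ne_zero_of_sum_ne_zero h
    obtain ⟨b, -, h⟩ := Finset.exists_ne_zero_of_sum_ne_zero h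
    exact (hF a b c d h).2.2
  · intro a b h
    obtain ⟨c, -, h⟩ := Finset.exists_ne_zero_of_sum_ne_zero h
    obtain ⟨d, -, h⟩ := Finset.exists_ne_zero_of_sum_ne_zero h
    exact ⟨(hF a b c d h).1, (hF a b c d h).2.1⟩

end Finsum

theorem apply_eq_apply_zero_of_apply_smul_eq {𝕜 E F : Type*} [NormedField 𝕜]
    [NormedAddCommGroup E] [NormedSpace 𝕜 E] [TopologicalSpace F] [T2Space F] {f : E → F}
    {a : 𝕜} (ha : 1 < ‖a‖) (hf : ContinuousAt f 0) (h : ∀ x, f (a • x) = f x) (x : E) :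
    f x = f 0 := by
  have ha₀ : a ≠ 0 := norm_pos_iff.1 (one_pos.trans ha)
  have hpow : ∀ n : ℕ, f (a⁻¹ ^ n • x) = f x := by
    intro n
    induction n with
    | zero => rw [pow_zero, one_smul]
    | succ n ih => rw [pow_succ', mul_smul, ← h, smul_inv_smul₀ ha₀, ih]
  have ha' : ‖a⁻¹‖ < 1 := by rw [norm_inv]; exact inv_lt_one_of_one_lt₀ ha
  have hlim : Tendsto (fun n : ℕ ↦ a⁻¹ ^ n • x) atTop (𝓝 0) := by
    simpa using (tendsto_pow_atTop_nhds_zero_of_norm_lt_one ha').smul_const x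
  have := hf.tendsto.comp hlim
  simp only [comp_def, hpow] at this
  exact tendsto_const_nhds_iff.mp this

theorem Int.mem_Icc_ceil_floor {R : Type*} [Ring R] [LinearOrder R] [FloorRing R] {a b : R}
    {i : ℤ} : i ∈ Finset.Icc ⌈a⌉ ⌊b⌋ ↔ a ≤ i ∧ i ≤ b := by
  rw [Finset.mem_Icc, Int.ceil_le, Int.le_floor]

noncomputable def periodization {M : Type*} [AddCommMonoid M] (f : ℝ × ℝ → M) (p : ℝ × ℝ) : M :=
  ∑ᶠ (i : ℤ) (j : ℤ), f (p.1 - i, p.2 - j)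

section Periodization

variable {M : Type*} [AddCommMonoid M] {f : ℝ × ℝ → M} {N : ℕ}

theorem periodization_eq_sum (hf : support f ⊆ Icc 0 (N : ℝ) ×ˢ Icc 0 (N : ℝ)) {p : ℝ × ℝ}
    {s t : Finset ℤ} (hs : ∀ i : ℤ, p.1 - i ∈ Icc (0 : ℝ) N → i ∈ s)
    (ht : ∀ j : ℤ, p.2 - j ∈ Icc (0 : ℝ) N → j ∈ t) :
    periodization f p = ∑ i ∈ s, ∑ j ∈ t, f (p.1 - i, p.2 - j) :=
  finsum_finsum_eq_sum_sum s t fun i j h ↦ ⟨hs i (hf h).1, ht j (hf h).2⟩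

theorem continuous_periodization [TopologicalSpace M] [ContinuousAdd M] (hcont : Continuous f)
    (hf : support f ⊆ Icc 0 (N : ℝ) ×ˢ Icc 0 (N : ℝ)) : Continuous (periodization f) := by
  refine continuous_iff_continuousAt.2 fun p ↦ ?_
  have hwindow : ∀ (z : ℝ) {u : ℝ}, u ∈ Ioo (z - 1) (z + 1) → ∀ i : ℤ,
      u - i ∈ Icc (0 : ℝ) N → i ∈ Finset.Icc ⌈z - N - 1⌉ ⌊z + 1⌋ := by
    rintro z u ⟨hu₁, hu₂⟩ i ⟨hi₁, hi₂⟩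
    rw [Int.mem_Icc_ceil_floor]
    constructor <;> linarith
  have hlocal : ∀ᶠ q in 𝓝 p, ∑ i ∈ Finset.Icc ⌈p.1 - N - 1⌉ ⌊p.1 + 1⌋,
      ∑ j ∈ Finset.Icc ⌈p.2 - N - 1⌉ ⌊p.2 + 1⌋, f (q.1 - i, q.2 - j) = periodization f q := by
    filter_upwards [prod_mem_nhds (Ioo_mem_nhds (sub_one_lt p.1) (lt_add_one p.1))
      (Ioo_mem_nhds (sub_one_lt p.2) (lt_add_one p.2))] with q hq
    exact (periodization_eq_sum hf (hwindow p.1 hq.1) (hwindow p.2 hq.2)).symm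
  exact ContinuousAt.congr (by fun_prop) hlocal

end Periodization

section Dilation

variable {φ : ℝ × ℝ → ℝ} {c : ℤ → ℤ → ℝ} {N : ℕ}

theorem apply_sub_intCast_eq_finsum (hc : support (uncurry c) ⊆ Icc 0 (N : ℤ) ×ˢ Icc 0 (N : ℤ))
    (hdil : ∀ x y : ℝ, φ (x, y) = ∑ k ∈ Finset.Icc 0 (N : ℤ), ∑ l ∈ Finset.Icc 0 (N : ℤ),
      c k l * φ (2 * x - k, 2 * y - l)) (x y : ℝ) (i j : ℤ) :
    φ (x - i, y - j) =
      ∑ᶠ (a : ℤ) (b : ℤ), c (a - 2 * i) (b - 2 * j) * φ (2 * x - a, 2 * y - b) := by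
  rw [hdil, ← finsum_finsum_eq_sum_sum _ _ fun k l h ↦ ?_]
  · rw [← finsum_comp_equiv (Equiv.subRight (2 * i))]
    refine finsum_congr fun a ↦ ?_
    rw [← finsum_comp_equiv (Equiv.subRight (2 * j))]
    refine finsum_congr fun b ↦ ?_
    simp only [Equiv.subRight_apply]
    congr 2
    refine Prod.ext ?_ ?_ <;> push_cast <;> ring
  · obtain ⟨hk, hl⟩ := @hc (k, l) (left_ne_zero_of_mul h)
    exact ⟨Finset.mem_Icc.2 hk, Finset.mem_Icc.2 hl⟩

theorem periodization_two_smul (hφ : support φ ⊆ Icc 0 (N : ℝ) ×ˢ Icc 0 (N : ℝ))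
    (hc : support (uncurry c) ⊆ Icc 0 (N : ℤ) ×ˢ Icc 0 (N : ℤ))
    (hdil : ∀ x y : ℝ, φ (x, y) = ∑ k ∈ Finset.Icc 0 (N : ℤ), ∑ l ∈ Finset.Icc 0 (N : ℤ),
      c k l * φ (2 * x - k, 2 * y - l))
    (hpar : ∀ a b : ℤ, ∑ᶠ (i : ℤ) (j : ℤ), c (a - 2 * i) (b - 2 * j) = 1) (p : ℝ × ℝ) :
    periodization φ ((2 : ℝ) • p) = periodization φ p := by
  obtain ⟨x, y⟩ := p
  have hsupp : ∀ i j a b : ℤ, c (a - 2 * i) (b - 2 * j) * φ (2 * x - a, 2 * y - b) ≠ 0 →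
      i ∈ Finset.Icc ⌈x - N⌉ ⌊x⌋ ∧ j ∈ Finset.Icc ⌈y - N⌉ ⌊y⌋ ∧
      a ∈ Finset.Icc ⌈2 * x - N⌉ ⌊2 * x⌋ ∧ b ∈ Finset.Icc ⌈2 * y - N⌉ ⌊2 * y⌋ := by
    intro i j a b h
    obtain ⟨⟨hk₀, hkN⟩, hl₀, hlN⟩ := @hc (a - 2 * i, b - 2 * j) (left_ne_zero_of_mul h)
    obtain ⟨⟨hu₀, huN⟩, hv₀, hvN⟩ := hφ (right_ne_zero_of_mul h)
    dsimp only at hk₀ hkN hl₀ hlN hu₀ huN hv₀ hvN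
    have hk : (0 : ℝ) ≤ a - 2 * i ∧ (a - 2 * i : ℝ) ≤ N :=
      ⟨by exact_mod_cast hk₀, by exact_mod_cast hkN⟩
    have hl : (0 : ℝ) ≤ b - 2 * j ∧ (b - 2 * j : ℝ) ≤ N :=
      ⟨by exact_mod_cast hl₀, by exact_mod_cast hlN⟩
    simp only [Int.mem_Icc_ceil_floor]
    refine ⟨⟨?_, ?_⟩, ⟨?_, ?_⟩, ⟨?_, ?_⟩, ?_, ?_⟩ <;> linarith [hk.1, hk.2, hl.1, hl.2]
  calc periodization φ ((2 : ℝ) • (x, y))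
      = ∑ᶠ (a : ℤ) (b : ℤ), (∑ᶠ (i : ℤ) (j : ℤ), c (a - 2 * i) (b - 2 * j)) *
          φ (2 * x - a, 2 * y - b) := by simp only [hpar, one_mul]; rfl
    _ = ∑ᶠ (a : ℤ) (b : ℤ), ∑ᶠ (i : ℤ) (j : ℤ), c (a - 2 * i) (b - 2 * j) *
          φ (2 * x - a, 2 * y - b) := by simp only [finsum_mul]
    _ = ∑ᶠ (i : ℤ) (j : ℤ), ∑ᶠ (a : ℤ) (b : ℤ), c (a - 2 * i) (b - 2 * j) *
          φ (2 * x - a, 2 * y - b) := (finsum_finsum_comm₂ _ _ _ _ hsupp).symm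
    _ = periodization φ (x, y) := finsum_congr fun i ↦ finsum_congr fun j ↦
          (apply_sub_intCast_eq_finsum hc hdil x y i j).symm

end Dilation

theorem add_intCast_mem_Ico_prod_iff {p : ℝ × ℝ} {k : ℤ × ℤ} :
    p + ((k.1 : ℝ), (k.2 : ℝ)) ∈ Ico (0 : ℝ) 1 ×ˢ Ico (0 : ℝ) 1 ↔
      ⌊p.1⌋ = -k.1 ∧ ⌊p.2⌋ = -k.2 := by
  simp only [mem_prod, mem_Ico, Prod.fst_add, Prod.snd_add, Int.floor_eq_iff, Int.cast_neg]
  constructor <;> rintro ⟨⟨h₁, h₂⟩, h₃, h₄⟩ <;> refine ⟨⟨?_, ?_⟩, ?_, ?_⟩ <;> linarith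

section Integral

variable {E : Type*} [NormedAddCommGroup E] [NormedSpace ℝ E] {f : ℝ × ℝ → E} {N : ℕ}

theorem integral_eq_sum_setIntegral_sub (hint : Integrable f)
    (hf : support f ⊆ Icc 0 (N : ℝ) ×ˢ Icc 0 (N : ℝ)) :
    ∫ p, f p = ∑ k ∈ Finset.Icc (-N : ℤ) 0 ×ˢ Finset.Icc (-N : ℤ) 0,
      ∫ p in Ico (0 : ℝ) 1 ×ˢ Ico (0 : ℝ) 1, f (p - ((k.1 : ℝ), (k.2 : ℝ))) := by
  set Q := Ico (0 : ℝ) 1 ×ˢ Ico (0 : ℝ) 1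
  let v : ℤ × ℤ → ℝ × ℝ := fun k ↦ (k.1, k.2)
  let cell : ℤ × ℤ → Set (ℝ × ℝ) := fun k ↦ (· + v k) ⁻¹' Q
  have hmem : ∀ p k, p ∈ cell k ↔ ⌊p.1⌋ = -k.1 ∧ ⌊p.2⌋ = -k.2 := fun _ _ ↦
    add_intCast_mem_Ico_prod_iff
  have hfloor : ∀ {u : ℝ}, 0 ≤ u → u ≤ N → -⌊u⌋ ∈ Finset.Icc (-N : ℤ) 0 := fun h₀ hN ↦ by
    have := Int.floor_nonneg.2 h₀
    have := (Int.floor_le_floor hN).trans_eq (Int.floor_natCast N)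
    rw [Finset.mem_Icc]
    omega
  have hcover : ∀ p ∉ ⋃ k ∈ Finset.Icc (-N : ℤ) 0 ×ˢ Finset.Icc (-N : ℤ) 0, cell k,
      f p = 0 := by
    intro p hp
    by_contra hfp
    obtain ⟨⟨h₁, h₂⟩, h₃, h₄⟩ := hf hfp
    exact hp (mem_biUnion (x := (-⌊p.1⌋, -⌊p.2⌋))
      (Finset.mem_product.2 ⟨hfloor h₁ h₂, hfloor h₃ h₄⟩)
      ((hmem _ _).2 ⟨(neg_neg _).symm, (neg_neg _).symm⟩))
  have hdisj : ∀ k k', k ≠ k' → Disjoint (cell k) (cell k') := fun k k' hne ↦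
    disjoint_left.2 fun p hk hk' ↦ hne <| by
      rw [hmem] at hk hk'
      exact Prod.ext (by omega) (by omega)
  have htranslate : ∀ k, ∫ p in Q, f (p - v k) = ∫ p in cell k, f p := fun k ↦ by
    rw [← (measurePreserving_add_right volume (v k)).setIntegral_preimage_emb
      (measurableEmbedding_addRight (v k)) (fun p ↦ f (p - v k))]
    simp only [add_sub_cancel_right, cell]
  rw [← setIntegral_eq_integral_of_forall_compl_eq_zero hcover, integral_biUnion_finset _
    (fun k _ ↦ measurable_add_const (v k) (measurableSet_Ico.prod measurableSet_Ico))
    (fun k _ k' _ ↦ hdisj k k') fun k _ ↦ hint.integrableOn]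
  exact Finset.sum_congr rfl fun k _ ↦ (htranslate k).symm

theorem setIntegral_periodization (hint : Integrable f)
    (hf : support f ⊆ Icc 0 (N : ℝ) ×ˢ Icc 0 (N : ℝ)) :
    ∫ p in Ico (0 : ℝ) 1 ×ˢ Ico (0 : ℝ) 1, periodization f p = ∫ p, f p := by
  have hwindow : ∀ {u : ℝ}, u ∈ Ico (0 : ℝ) 1 → ∀ i : ℤ, u - i ∈ Icc (0 : ℝ) N →
      i ∈ Finset.Icc (-N : ℤ) 0 := by
    rintro u ⟨hu₀, hu₁⟩ i ⟨hi₀, hiN⟩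
    have hi : i < 1 := by exact_mod_cast (show (i : ℝ) < 1 by linarith)
    rw [Finset.mem_Icc]
    exact ⟨by exact_mod_cast (show (-N : ℝ) ≤ i by linarith), by omega⟩
  rw [integral_eq_sum_setIntegral_sub hint hf, ← integral_finsetSum _ fun k _ ↦
    (hint.comp_sub_right _).integrableOn]
  refine setIntegral_congr_fun (measurableSet_Ico.prod measurableSet_Ico) fun p hp ↦ ?_
  exact (periodization_eq_sum hf (hwindow hp.1) (hwindow hp.2)).trans
    (Finset.sum_product _ _ (fun k : ℤ × ℤ ↦ f (p - ((k.1 : ℝ), (k.2 : ℝ))))).symm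

end Integral

theorem partition_of_unity (φ : ℝ × ℝ → ℝ) (c : ℤ → ℤ → ℝ)
    (hcont : Continuous φ)
    (hsuppφ : ∀ p : ℝ × ℝ, p ∉ Set.Icc (0 : ℝ) 3 ×ˢ Set.Icc (0 : ℝ) 3 → φ p = 0)
    (hsuppc : ∀ i j : ℤ, i ∉ Finset.Icc (0 : ℤ) 3 ∨ j ∉ Finset.Icc (0 : ℤ) 3 → c i j = 0)
    (hdil : ∀ x y : ℝ, φ (x, y) =
      ∑ i ∈ Finset.Icc (0 : ℤ) 3, ∑ j ∈ Finset.Icc (0 : ℤ) 3,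
        c i j * φ (2 * x - (i : ℝ), 2 * y - (j : ℝ)))
    (hparity : ∀ a b : ℤ, ∑ᶠ (i : ℤ) (j : ℤ), c (a - 2 * i) (b - 2 * j) = 1)
    (havg : ∫ p : ℝ × ℝ, φ p = 1) :
    ∀ x y : ℝ, ∑ᶠ (i : ℤ) (j : ℤ), φ (x - (i : ℝ), y - (j : ℝ)) = 1 := by
  have hφ : support φ ⊆ Icc 0 ((3 : ℕ) : ℝ) ×ˢ Icc 0 ((3 : ℕ) : ℝ) :=
    support_subset_iff'.2 hsuppφ
  have hc : support (uncurry c) ⊆ Icc 0 ((3 : ℕ) : ℤ) ×ˢ Icc 0 ((3 : ℕ) : ℤ) := by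
    refine support_subset_iff'.2 fun k hk ↦ hsuppc k.1 k.2 ?_
    rw [mem_prod, not_and_or] at hk
    simpa using hk
  have hconst : ∀ p, periodization φ p = periodization φ 0 :=
    apply_eq_apply_zero_of_apply_smul_eq (a := (2 : ℝ)) (by norm_num)
      (continuous_periodization hcont hφ).continuousAt (periodization_two_smul hφ hc hdil hparity)
  have hintegral := setIntegral_periodization
    (hcont.integrable_of_hasCompactSupport (.intro (isCompact_Icc.prod isCompact_Icc) hsuppφ)) hφ
  rw [setIntegral_congr_fun (measurableSet_Ico.prod measurableSet_Ico) fun p _ ↦ hconst p,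
    setIntegral_const, havg, Measure.volume_eq_prod, measureReal_prod_prod,
    Real.volume_real_Ico] at hintegral
  norm_num at hintegral
  exact fun x y ↦ (hconst (x, y)).trans hintegral
end
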